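/- Let T ∈ B(H) be a norm limit of complex symmetric operators. Then σ_ap(T) = conj(σ_ap(T*)), and consequently σ(T) = σ_ap(T). -/

import Mathlib

/-!
For `S = C S* C` the conjugation `C` is an isometry carrying `(S - μ) x` to `(S* - conj μ) (C x)`,
so it turns approximate eigenvectors of `S` for `μ` into approximate eigenvectors of `S*` for
`conj μ`. An approximate eigenvector of `T` is one of every operator close enough to `T`, so this
passes to norm limits of such `S`, a class closed under taking adjoints. Finally, if `T - μ` is
bounded below and `T* - conj μ` is injective, then `T - μ` has closed dense range, hence is
invertible: `σ(T) ⊆ σ_ap(T) ∪ conj σ_ap(T*)`.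
-/

open Filter Topology ContinuousLinearMap

def IsConjugation {H : Type*} [NormedAddCommGroup H] [InnerProductSpace ℂ H]
    (C : H → H) : Prop :=
  (∀ x y, C (x + y) = C x + C y) ∧
  (∀ (a : ℂ) (x : H), C (a • x) = (starRingEnd ℂ a) • C x) ∧
  (∀ x, ‖C x‖ = ‖x‖) ∧
  (∀ x, C (C x) = x)

def IsCSO {H : Type*} [NormedAddCommGroup H] [InnerProductSpace ℂ H]
    [CompleteSpace H] (T : H →L[ℂ] H) : Prop :=
  ∃ C : H → H, IsConjugation C ∧ ∀ x, T x = C (adjoint T (C x))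

def approxSpec {H : Type*} [NormedAddCommGroup H] [InnerProductSpace ℂ H]
    (T : H →L[ℂ] H) : Set ℂ :=
  {lam | ∀ ε > (0:ℝ), ∃ x : H, ‖x‖ = 1 ∧ ‖T x - lam • x‖ < ε}

section OperatorBounds

variable {𝕜 E F : Type*} [RCLike 𝕜] [NormedAddCommGroup E] [NormedSpace 𝕜 E]
  [NormedAddCommGroup F] [NormedSpace 𝕜 F]

lemma ContinuousLinearMap.antilipschitz_of_le_norm_apply_of_norm_eq_one {f : E →L[𝕜] F} {ε : ℝ}
    (hε : 0 < ε) (h : ∀ x, ‖x‖ = 1 → ε ≤ ‖f x‖) : AntilipschitzWith (Real.toNNReal ε⁻¹) f := by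
  refine f.antilipschitz_of_bound fun x => ?_
  rcases eq_or_ne x 0 with rfl | hx
  · simp
  have hbound := h _ (norm_smul_inv_norm (𝕜 := 𝕜) hx)
  rw [map_smul, norm_smul, norm_inv, RCLike.norm_ofReal, abs_norm,
    le_inv_mul_iff₀ (norm_pos_iff.mpr hx)] at hbound
  rw [Real.coe_toNNReal _ (by positivity), inv_mul_eq_div, le_div_iff₀ hε]
  exact hbound

lemma ContinuousLinearMap.norm_apply_sub_smul_le (T S : E →L[𝕜] E) (μ : 𝕜) {x : E}
    (hx : ‖x‖ = 1) : ‖T x - μ • x‖ ≤ ‖T - S‖ + ‖S x - μ • x‖ :=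
  calc ‖T x - μ • x‖ ≤ ‖T x - S x‖ + ‖S x - μ • x‖ := norm_sub_le_norm_sub_add_norm_sub _ _ _
    _ ≤ ‖T - S‖ + ‖S x - μ • x‖ := by
      gcongr
      exact (T - S).unit_le_opNorm x hx.le

lemma isUnit_of_antilipschitz_of_injective_adjoint {H : Type*} [NormedAddCommGroup H]
    [InnerProductSpace 𝕜 H] [CompleteSpace H] {A : H →L[𝕜] H} {K} (hA : AntilipschitzWith K A)
    (hA' : Function.Injective (adjoint A)) : IsUnit A := by
  rw [isUnit_iff_bijective, bijective_iff_dense_range_and_antilipschitz,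
    Submodule.topologicalClosure_eq_top_iff, orthogonal_range]
  exact ⟨LinearMap.ker_eq_bot.mpr hA', K, hA⟩

end OperatorBounds

section ApproxSpec

variable {H : Type*} [NormedAddCommGroup H] [InnerProductSpace ℂ H]

lemma notMem_approxSpec_iff {T : H →L[ℂ] H} {μ : ℂ} :
    μ ∉ approxSpec T ↔ ∃ K, AntilipschitzWith K (T - μ • 1 : H →L[ℂ] H) := by
  simp only [approxSpec, Set.mem_ofPred_eq, not_forall, not_exists, not_and, not_lt]
  constructor
  · rintro ⟨ε, hε, h⟩
    exact ⟨_, antilipschitz_of_le_norm_apply_of_norm_eq_one hε fun x hx => by simpa using h x hx⟩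
  · rintro ⟨K, hK⟩
    refine ⟨((K : ℝ) + 1)⁻¹, by positivity, fun x hx => ?_⟩
    have hbound := (T - μ • 1 : H →L[ℂ] H).bound_of_antilipschitz hK x
    simp only [hx, sub_apply, smul_apply, one_apply_eq_self] at hbound
    rw [inv_le_iff_one_le_mul₀' (by positivity)]
    nlinarith [norm_nonneg (T x - μ • x)]

lemma notMem_spectrum_iff_isUnit_sub_smul_one {T : H →L[ℂ] H} {μ : ℂ} :
    μ ∉ spectrum ℂ T ↔ IsUnit (T - μ • 1) := by
  rw [spectrum.notMem_iff, ← IsUnit.neg_iff, neg_sub, Algebra.algebraMap_eq_smul_one]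

lemma approxSpec_subset_spectrum (T : H →L[ℂ] H) : approxSpec T ⊆ spectrum ℂ T := by
  intro μ hμ
  by_contra hres
  have hunit := notMem_spectrum_iff_isUnit_sub_smul_one.mp hres
  exact notMem_approxSpec_iff.mpr
    ⟨_, (ContinuousLinearEquiv.unitsEquiv ℂ H hunit.unit).antilipschitz⟩ hμ

variable [CompleteSpace H]

lemma adjoint_sub_smul_one (T : H →L[ℂ] H) (μ : ℂ) :
    adjoint (T - μ • 1) = adjoint T - starRingEnd ℂ μ • 1 := by
  rw [map_sub, LinearIsometryEquiv.map_smulₛₗ, adjoint_one]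

lemma spectrum_subset_approxSpec_union (T : H →L[ℂ] H) :
    spectrum ℂ T ⊆ approxSpec T ∪ starRingEnd ℂ '' approxSpec (adjoint T) := by
  intro μ hμ
  by_contra! h
  obtain ⟨hμT, hμT'⟩ := not_or.mp h
  obtain ⟨K, hK⟩ := notMem_approxSpec_iff.mp hμT
  have hconj : starRingEnd ℂ μ ∉ approxSpec (adjoint T) := fun hmem =>
    hμT' ⟨_, hmem, Complex.conj_conj μ⟩
  obtain ⟨K', hK'⟩ := notMem_approxSpec_iff.mp hconj
  rw [← adjoint_sub_smul_one] at hK'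
  exact notMem_spectrum_iff_isUnit_sub_smul_one.mpr
    (isUnit_of_antilipschitz_of_injective_adjoint hK hK'.injective) hμ

end ApproxSpec

section ComplexSymmetric

variable {H : Type*} [NormedAddCommGroup H] [InnerProductSpace ℂ H]

lemma IsConjugation.map_sub {C : H → H} (hC : IsConjugation C) (a b : H) :
    C (a - b) = C a - C b :=
  (AddMonoidHom.mk' C hC.1).map_sub a b

variable [CompleteSpace H]

lemma IsCSO.exists_norm_adjoint_sub_smul_eq {S : H →L[ℂ] H} (hS : IsCSO S) (μ : ℂ) (x : H) :
    ∃ y, ‖y‖ = ‖x‖ ∧ ‖adjoint S y - starRingEnd ℂ μ • y‖ = ‖S x - μ • x‖ := by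
  obtain ⟨C, hC, hSC⟩ := hS
  refine ⟨C x, hC.2.2.1 x, ?_⟩
  rw [← hC.2.2.1, hC.map_sub, hC.2.1, ← hSC, hC.2.2.2, Complex.conj_conj]

lemma IsCSO.adjoint {S : H →L[ℂ] H} (hS : IsCSO S) : IsCSO (adjoint S) := by
  obtain ⟨C, hC, hSC⟩ := hS
  refine ⟨C, hC, fun x => ?_⟩
  rw [adjoint_adjoint, hSC, hC.2.2.2, hC.2.2.2]

lemma mem_closure_isCSO_adjoint {T : H →L[ℂ] H} (hT : T ∈ closure {S | IsCSO S}) :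
    adjoint T ∈ closure {S : H →L[ℂ] H | IsCSO S} :=
  map_mem_closure (adjoint (𝕜 := ℂ) (E := H) (F := H)).continuous hT fun _ hS => hS.adjoint

lemma conj_mem_approxSpec_adjoint {T : H →L[ℂ] H} (hT : T ∈ closure {S | IsCSO S}) {μ : ℂ}
    (hμ : μ ∈ approxSpec T) : starRingEnd ℂ μ ∈ approxSpec (adjoint T) := by
  intro ε hε
  obtain ⟨S, hS, hTS⟩ := Metric.mem_closure_iff.mp hT (ε / 3) (by positivity)
  obtain ⟨x, hx, hTx⟩ := hμ (ε / 3) (by positivity)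
  obtain ⟨y, hy, hSy⟩ := hS.exists_norm_adjoint_sub_smul_eq μ x
  rw [dist_eq_norm] at hTS
  refine ⟨y, hy.trans hx, ?_⟩
  calc ‖adjoint T y - starRingEnd ℂ μ • y‖
      ≤ ‖adjoint T - adjoint S‖ + ‖adjoint S y - starRingEnd ℂ μ • y‖ :=
        norm_apply_sub_smul_le _ _ _ (hy.trans hx)
    _ = ‖T - S‖ + ‖S x - μ • x‖ := by rw [← map_sub, LinearIsometryEquiv.norm_map, hSy]
    _ ≤ ‖T - S‖ + (‖S - T‖ + ‖T x - μ • x‖) := by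
        gcongr
        exact norm_apply_sub_smul_le _ _ _ hx
    _ < ε := by rw [norm_sub_rev S T]; linarith

lemma approxSpec_eq_image_conj_adjoint {T : H →L[ℂ] H} (hT : T ∈ closure {S | IsCSO S}) :
    approxSpec T = starRingEnd ℂ '' approxSpec (adjoint T) := by
  ext μ
  refine ⟨fun hμ => ⟨_, conj_mem_approxSpec_adjoint hT hμ, Complex.conj_conj μ⟩, ?_⟩
  rintro ⟨ν, hν, rfl⟩
  simpa using conj_mem_approxSpec_adjoint (mem_closure_isCSO_adjoint hT) hν

lemma spectrum_eq_approxSpec {T : H →L[ℂ] H} (hT : T ∈ closure {S | IsCSO S}) :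
    spectrum ℂ T = approxSpec T := by
  refine (approxSpec_subset_spectrum T).antisymm' ?_
  simpa [← approxSpec_eq_image_conj_adjoint hT] using spectrum_subset_approxSpec_union T

end ComplexSymmetric

theorem spectra_of_norm_limit_CSO_general {H : Type*} [NormedAddCommGroup H]
    [InnerProductSpace ℂ H] [CompleteSpace H]
    (T : H →L[ℂ] H)
    (hlim : ∃ Tseq : ℕ → (H →L[ℂ] H), (∀ n, IsCSO (Tseq n)) ∧
      Tendsto Tseq atTop (𝓝 T)) :
    approxSpec T = (starRingEnd ℂ) '' approxSpec (adjoint T) ∧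
    spectrum ℂ T = approxSpec T := by
  obtain ⟨Tseq, hcso, htend⟩ := hlim
  have hT : T ∈ closure {S | IsCSO S} := mem_closure_of_tendsto htend (.of_forall hcso)
  exact ⟨approxSpec_eq_image_conj_adjoint hT, spectrum_eq_approxSpec hT⟩

/-- For a norm limit of complex symmetric operators,
`σ_ap(T) = conj(σ_ap(T*))` and `σ(T) = σ_ap(T)`. -/
theorem spectra_of_norm_limit_CSO {H : Type*} [NormedAddCommGroup H]
    [InnerProductSpace ℂ H] [CompleteSpace H] [Nontrivial H]
    (T : H →L[ℂ] H)
    (hlim : ∃ Tseq : ℕ → (H →L[ℂ] H), (∀ n, IsCSO (Tseq n)) ∧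
      Tendsto Tseq atTop (𝓝 T)) :
    approxSpec T = (starRingEnd ℂ) '' approxSpec (adjoint T) ∧
    spectrum ℂ T = approxSpec T :=
  spectra_of_norm_limit_CSO_general T hlim
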